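/- arXiv:2512.22646 — 2 statements merged into one kernel-verified Lean document; each statement's English description precedes it below -/
import Mathlib

section
/- Let q ≥ 1 and a be natural numbers with a ≤ q, and let g_c : ℝ → ℝ → ℝ be a kernel, continuous on the triangular domain D_T := {(t,τ) : 0 ≤ t ≤ T, 0 ≤ τ ≤ t} for every T > 0, with g_c(t,τ) ≥ 0 for all 0 ≤ τ ≤ t. Assume: (i) there exists M₁ ≥ 0 with ∫₀^(min(t,1)) g_c(t,τ) dτ ≤ M₁ for all t ≥ 0, and (ii) there exists M₂ ≥ 0 with ∫₀ᵗ g_c(t,τ)·τ^q dτ ≤ M₂ for all t ≥ 0. Then there exists M ≥ 0 such that ∫₀ᵗ g_c(t,τ)·τ^a dτ ≤ M for all t ≥ 0. (Paper's Lemma 5(b).) -/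
/-! On `[0, min t 1]` the weight `τ ^ a` is at most `1`, and on `[min t 1, t]` (nondegenerate
only when `t > 1`) it is at most `τ ^ q`. -/

open intervalIntegral Set

/-- A kernel `g : ℝ → ℝ → ℝ` is continuous on the triangular domain
`D_T = {(t,τ) : 0 ≤ t ≤ T, 0 ≤ τ ≤ t}` for every `T > 0`. -/
def ContinuousOnTriangles (g : ℝ → ℝ → ℝ) : Prop :=
  ∀ T : ℝ, 0 < T →
    ContinuousOn (fun p : ℝ × ℝ => g p.1 p.2)
      {p : ℝ × ℝ | 0 ≤ p.1 ∧ p.1 ≤ T ∧ 0 ≤ p.2 ∧ p.2 ≤ p.1}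

theorem ContinuousOnTriangles.continuousOn_Icc {g : ℝ → ℝ → ℝ} (hg : ContinuousOnTriangles g)
    {t : ℝ} (ht : 0 ≤ t) : ContinuousOn (g t) (Icc 0 t) :=
  (hg (max t 1) (lt_max_of_lt_right one_pos)).comp (Continuous.prodMk_right t).continuousOn
    fun _ hτ => ⟨ht, le_max_left _ _, hτ.1, hτ.2⟩

theorem integral_mul_pow_le_integral_add_integral_mul_pow {f : ℝ → ℝ} {t : ℝ} {a q : ℕ}
    (ht : 0 ≤ t) (haq : a ≤ q) (hf : ContinuousOn f (Icc 0 t))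
    (hf_nonneg : ∀ τ ∈ Icc 0 t, 0 ≤ f τ) :
    ∫ τ in (0 : ℝ)..t, f τ * τ ^ a ≤
      (∫ τ in (0 : ℝ)..min t 1, f τ) + ∫ τ in (0 : ℝ)..t, f τ * τ ^ q := by
  set m := min t 1
  have hm0 : 0 ≤ m := le_min ht zero_le_one
  have hmt : m ≤ t := min_le_left t 1
  have hint : ∀ n : ℕ, IntervalIntegrable (fun τ => f τ * τ ^ n) MeasureTheory.volume 0 t :=
    fun n => (hf.mul (continuous_pow n).continuousOn).intervalIntegrable_of_Icc ht
  have hm_mem : m ∈ uIcc 0 t := by rw [uIcc_of_le ht]; exact ⟨hm0, hmt⟩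
  have hint_left n := (hint n).mono_set (uIcc_subset_uIcc_left hm_mem)
  have hint_right n := (hint n).mono_set (uIcc_subset_uIcc_right hm_mem)
  have h_near : ∫ τ in (0 : ℝ)..m, f τ * τ ^ a ≤ ∫ τ in (0 : ℝ)..m, f τ := by
    refine integral_mono_on hm0 (hint_left a) (by simpa using hint_left 0) fun τ hτ => ?_
    have hτ1 : τ ≤ 1 := hτ.2.trans (min_le_right t 1)
    exact mul_le_of_le_one_right (hf_nonneg τ ⟨hτ.1, hτ.2.trans hmt⟩) (pow_le_one₀ hτ.1 hτ1)
  have h_far : ∫ τ in m..t, f τ * τ ^ a ≤ ∫ τ in m..t, f τ * τ ^ q := by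
    refine integral_mono_on_of_le_Ioo hmt (hint_right a) (hint_right q) fun τ hτ => ?_
    have hτ1 : 1 ≤ τ := (min_lt_iff.mp hτ.1).resolve_left hτ.2.not_gt |>.le
    exact mul_le_mul_of_nonneg_left (pow_le_pow_right₀ hτ1 haq)
      (hf_nonneg τ ⟨zero_le_one.trans hτ1, hτ.2.le⟩)
  have h_tail : ∫ τ in m..t, f τ * τ ^ q ≤ ∫ τ in (0 : ℝ)..t, f τ * τ ^ q := by
    refine integral_mono_interval hm0 hmt le_rfl ?_ (hint q)
    refine (MeasureTheory.ae_restrict_iff' measurableSet_Ioc).mpr (.of_forall fun τ hτ => ?_)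
    exact mul_nonneg (hf_nonneg τ (Ioc_subset_Icc_self hτ)) (pow_nonneg hτ.1.le q)
  rw [← integral_add_adjacent_intervals (hint_left a) (hint_right a)]
  linarith

theorem lower_moment_integral_bounded_general
    (q a : ℕ) (haq : a ≤ q)
    (g_c : ℝ → ℝ → ℝ)
    (hgc_cont : ContinuousOnTriangles g_c)
    (hnonneg : ∀ t τ : ℝ, 0 ≤ τ → τ ≤ t → 0 ≤ g_c t τ)
    (M₁ : ℝ) (hM₁ : 0 ≤ M₁)
    (hbound₁ : ∀ t : ℝ, 0 ≤ t → (∫ τ in (0:ℝ)..(min t 1), g_c t τ) ≤ M₁)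
    (M₂ : ℝ) (hM₂ : 0 ≤ M₂)
    (hbound₂ : ∀ t : ℝ, 0 ≤ t → (∫ τ in (0:ℝ)..t, g_c t τ * τ ^ q) ≤ M₂) :
    ∃ M : ℝ, 0 ≤ M ∧ ∀ t : ℝ, 0 ≤ t →
      (∫ τ in (0:ℝ)..t, g_c t τ * τ ^ a) ≤ M := by
  refine ⟨M₁ + M₂, add_nonneg hM₁ hM₂, fun t ht => ?_⟩
  have h := integral_mul_pow_le_integral_add_integral_mul_pow ht haq
    (hgc_cont.continuousOn_Icc ht) fun τ hτ => hnonneg t τ hτ.1 hτ.2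
  linarith [hbound₁ t ht, hbound₂ t ht]

/-- **Paper's Lemma 5(b).** If `g_c ≥ 0` on the triangle, `∫₀^(min(t,1)) g_c(t,τ) dτ`
and `∫₀ᵗ g_c(t,τ) τ^q dτ` are uniformly bounded, then for any `a ≤ q` the integral
`∫₀ᵗ g_c(t,τ) τ^a dτ` is uniformly bounded. -/
theorem lower_moment_integral_bounded
    (q a : ℕ) (hq : 1 ≤ q) (haq : a ≤ q)
    (g_c : ℝ → ℝ → ℝ)
    (hgc_cont : ContinuousOnTriangles g_c)
    (hnonneg : ∀ t τ : ℝ, 0 ≤ τ → τ ≤ t → 0 ≤ g_c t τ)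
    (M₁ : ℝ) (hM₁ : 0 ≤ M₁)
    (hbound₁ : ∀ t : ℝ, 0 ≤ t → (∫ τ in (0:ℝ)..(min t 1), g_c t τ) ≤ M₁)
    (M₂ : ℝ) (hM₂ : 0 ≤ M₂)
    (hbound₂ : ∀ t : ℝ, 0 ≤ t → (∫ τ in (0:ℝ)..t, g_c t τ * τ ^ q) ≤ M₂) :
    ∃ M : ℝ, 0 ≤ M ∧ ∀ t : ℝ, 0 ≤ t →
      (∫ τ in (0:ℝ)..t, g_c t τ * τ ^ a) ≤ M :=
  lower_moment_integral_bounded_general q a haq g_c hgc_cont hnonneg M₁ hM₁ hbound₁ M₂ hM₂ hbound₂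
end

section
/- Let q ≥ 1 and a be natural numbers with a ≤ q, and let g_c, G_cp : ℝ → ℝ → ℝ be kernels, each continuous on the triangular domain D_T := {(t,τ) : 0 ≤ t ≤ T, 0 ≤ τ ≤ t} for every T > 0, with G_cp(t,τ) ≥ g_c(t,τ) ≥ 0 for all 0 ≤ τ ≤ t. Define the closed-loop kernel K(t,σ) := ∫_σ^t G_cp(t,τ)·(τ−σ)^(q−1)/(q−1)! dτ. Assume: (i) [stability of the LVIE] for every ε > 0 there exists δ > 0 such that for every continuous φ : ℝ → ℝ with |φ(t)| < δ for all t ≥ 0 and every continuous x : ℝ → ℝ satisfying x(t) = ∫₀ᵗ K(t,τ)·x(τ) dτ + φ(t) for all t ≥ 0, one has |x(t)| < ε for all t ≥ 0; (ii) there exists M ≥ 0 with ∫₀ᵗ K(t,σ) dσ ≤ M for all t ≥ 0; (iii) there exists M₁ ≥ 0 with ∫₀^(min(t,1)) g_c(t,τ) dτ ≤ M₁ for all t ≥ 0. Then for every ε > 0 there exists a real number h ≠ 0 such that every continuous u : ℝ → ℝ satisfying u(t) = ∫₀ᵗ K(t,τ)·u(τ) dτ + (h/a!)·∫₀ᵗ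 g_c(t,τ)·τ^a dτ for all t ≥ 0 satisfies |u(t)| ≤ ε for all t ≥ 0. (Paper's Theorem 6: ε-stealth of polynomial FDIAs of degree a ≤ q.) -/
/-!
The forcing term `φ t = (h / a!) ∫₀ᵗ g_c(t,τ) τ^a dτ` is bounded uniformly in `t ≥ 0`. Splitting
the integral at `min t 1`, the piece near `0` is controlled by (iii), while for `τ ≥ 1` we have
`g_c τ^a ≤ G_cp τ^q`, and by Fubini (Cauchy's formula for repeated integration)
`∫₀ᵗ G_cp(t,τ) τ^q dτ = q! ∫₀ᵗ K(t,σ) dσ ≤ q! M`. Choosing `h` small makes `|φ| < δ`, and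
stability of the LVIE gives `|u| < ε`.
-/

open intervalIntegral Set

open MeasureTheory

theorem integral_integral_triangle_swap {f : ℝ → ℝ → ℝ} {a b : ℝ} (hab : a ≤ b)
    (hf : IntegrableOn (Function.uncurry f) (Ioc a b ×ˢ Ioc a b)) :
    ∫ σ in a..b, ∫ τ in σ..b, f σ τ = ∫ τ in a..b, ∫ σ in a..τ, f σ τ := by
  set F : ℝ → ℝ → ℝ := fun σ τ => if σ < τ then f σ τ else 0 with hF
  have hF_row : ∀ σ, F σ = (Ioi σ).indicator (f σ) := fun σ => by
    ext τ; simp [hF, indicator]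
  have hF_col : ∀ τ, (F · τ) = (Iio τ).indicator (f · τ) := fun τ => by
    ext σ; simp [hF, indicator]
  have hF_int : Integrable (Function.uncurry F)
      ((volume.restrict (Ioc a b)).prod (volume.restrict (Ioc a b))) := by
    have : Function.uncurry F = {p : ℝ × ℝ | p.1 < p.2}.indicator (Function.uncurry f) := by
      ext p; simp [hF, indicator, Function.uncurry]
    rw [this, Measure.prod_restrict]
    exact hf.indicator (measurableSet_lt measurable_fst measurable_snd)
  have h_row : ∀ σ ∈ uIcc a b, ∫ τ in σ..b, f σ τ = ∫ τ in Ioc a b, F σ τ := by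
    intro σ hσ
    rw [uIcc_of_le hab] at hσ
    rw [hF_row, setIntegral_indicator measurableSet_Ioi, Ioc_inter_Ioi, max_eq_right hσ.1,
      integral_of_le hσ.2]
  have h_col : ∀ τ ∈ uIcc a b, ∫ σ in a..τ, f σ τ = ∫ σ in Ioc a b, F σ τ := by
    intro τ hτ
    rw [uIcc_of_le hab] at hτ
    have : Ioc a b ∩ Iio τ = Ioo a τ := by
      ext σ
      simp only [mem_inter_iff, mem_Ioc, mem_Iio, mem_Ioo]
      exact ⟨fun h => ⟨h.1.1, h.2⟩, fun h => ⟨⟨h.1, h.2.le.trans hτ.2⟩, h.2⟩⟩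
    rw [hF_col, setIntegral_indicator measurableSet_Iio, this, integral_of_le hτ.1,
      integral_Ioc_eq_integral_Ioo]
  rw [integral_congr h_row, integral_congr h_col, integral_of_le hab, integral_of_le hab]
  exact integral_integral_swap hF_int

open Nat in
theorem integral_integral_mul_sub_pow {G : ℝ → ℝ} {a b : ℝ} (hab : a ≤ b)
    (hG : ContinuousOn G (Icc a b)) (n : ℕ) :
    ∫ σ in a..b, ∫ τ in σ..b, G τ * (τ - σ) ^ n / n ! =
      ∫ τ in a..b, G τ * (τ - a) ^ (n + 1) / (n + 1)! := by
  rw [integral_integral_triangle_swap hab]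
  · refine integral_congr fun τ _ => ?_
    have h_inner : ∫ σ in a..τ, (τ - σ) ^ n = (τ - a) ^ (n + 1) / (n + 1) := by
      simp [integral_comp_sub_left (fun x => x ^ n), integral_pow]
    simp_rw [mul_div_right_comm (G τ), intervalIntegral.integral_const_mul, h_inner,
      factorial_succ]
    push_cast
    field_simp
  · refine (ContinuousOn.integrableOn_compact (isCompact_Icc.prod isCompact_Icc) ?_).mono_set
      (prod_mono Ioc_subset_Icc_self Ioc_subset_Icc_self)
    exact (hG.comp continuousOn_snd fun p hp => hp.2).mul (by fun_prop) |>.div_const _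

theorem integral_mul_pow_le_integral_add {g G : ℝ → ℝ} {t : ℝ} {a q : ℕ} (ht : 0 ≤ t)
    (haq : a ≤ q) (hg : ContinuousOn g (Icc 0 t)) (hG : ContinuousOn G (Icc 0 t))
    (hg_nonneg : ∀ τ ∈ Icc 0 t, 0 ≤ g τ) (hgG : ∀ τ ∈ Icc 0 t, g τ ≤ G τ) :
    ∫ τ in 0..t, g τ * τ ^ a ≤ (∫ τ in 0..min t 1, g τ) + ∫ τ in 0..t, G τ * τ ^ q := by
  set m := min t 1
  have hm : m ∈ Icc 0 t := ⟨le_min ht zero_le_one, min_le_left _ _⟩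
  have hint : ∀ {f : ℝ → ℝ}, ContinuousOn f (Icc 0 t) →
      ∀ {c d}, c ∈ Icc 0 t → d ∈ Icc 0 t → IntervalIntegrable f volume c d :=
    fun hf _ _ hc hd => (hf.intervalIntegrable_of_Icc ht).mono_set
      (uIcc_subset_uIcc (by rwa [uIcc_of_le ht]) (by rwa [uIcc_of_le ht]))
  have hga : ContinuousOn (fun τ => g τ * τ ^ a) (Icc 0 t) := hg.mul (by fun_prop)
  have hGq : ContinuousOn (fun τ => G τ * τ ^ q) (Icc 0 t) := hG.mul (by fun_prop)
  have h0 : (0 : ℝ) ∈ Icc 0 t := ⟨le_rfl, ht⟩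
  have htt : t ∈ Icc 0 t := ⟨ht, le_rfl⟩
  have hGq_nonneg : 0 ≤ ∫ τ in 0..m, G τ * τ ^ q :=
    integral_nonneg hm.1 fun τ hτ => mul_nonneg
      ((hg_nonneg τ ⟨hτ.1, hτ.2.trans hm.2⟩).trans (hgG τ ⟨hτ.1, hτ.2.trans hm.2⟩))
      (pow_nonneg hτ.1 q)
  have h_head : ∫ τ in 0..m, g τ * τ ^ a ≤ ∫ τ in 0..m, g τ := by
    refine integral_mono_on hm.1 (hint hga h0 hm) (hint hg h0 hm) fun τ hτ => ?_
    exact mul_le_of_le_one_right (hg_nonneg τ ⟨hτ.1, hτ.2.trans hm.2⟩)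
      (pow_le_one₀ hτ.1 (hτ.2.trans (min_le_right _ _)))
  have h_tail : ∫ τ in m..t, g τ * τ ^ a ≤ ∫ τ in m..t, G τ * τ ^ q := by
    refine integral_mono_on_of_le_Ioo hm.2 (hint hga hm htt) (hint hGq hm htt) fun τ hτ => ?_
    have hτ0 : 0 ≤ τ := hm.1.trans hτ.1.le
    have hτ1 : 1 ≤ τ := ((min_lt_iff.1 hτ.1).resolve_left (not_lt.2 hτ.2.le)).le
    exact mul_le_mul (hgG τ ⟨hτ0, hτ.2.le⟩) (pow_le_pow_right₀ hτ1 haq) (by positivity)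
      ((hg_nonneg τ ⟨hτ0, hτ.2.le⟩).trans (hgG τ ⟨hτ0, hτ.2.le⟩))
  rw [← integral_add_adjacent_intervals (hint hga h0 hm) (hint hga hm htt),
    ← integral_add_adjacent_intervals (hint hGq h0 hm) (hint hGq hm htt)]
  linarith

namespace ContinuousOnTriangles

variable {g : ℝ → ℝ → ℝ}

theorem continuousOn_wedge (hg : ContinuousOnTriangles g) :
    ContinuousOn (fun p : ℝ × ℝ => g p.1 p.2) {p | 0 ≤ p.2 ∧ p.2 ≤ p.1} := by
  intro p hp
  have hp₁ : p.1 < p.1 + 1 := lt_add_one _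
  refine ((hg _ ((hp.1.trans hp.2).trans_lt hp₁)) p ⟨hp.1.trans hp.2, hp₁.le, hp⟩)
    |>.mono_of_mem_nhdsWithin ?_
  filter_upwards [self_mem_nhdsWithin, nhdsWithin_le_nhds
    ((isOpen_lt continuous_fst continuous_const).mem_nhds hp₁)] with x hx hx₁
  exact ⟨hx.1.trans hx.2, hx₁.le, hx⟩

theorem exists_continuous_extension (hg : ContinuousOnTriangles g) :
    ∃ g' : ℝ × ℝ → ℝ, Continuous g' ∧ ∀ t τ, 0 ≤ τ → τ ≤ t → g' (t, τ) = g t τ := by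
  -- `(t, τ) ↦ (max t τ⁺, τ⁺)` is a continuous retraction of the plane onto the wedge
  refine ⟨fun p => g (max p.1 (max p.2 0)) (max p.2 0), ?_, fun t τ hτ ht => ?_⟩
  · exact hg.continuousOn_wedge.comp_continuous
      (f := fun p : ℝ × ℝ => (max p.1 (max p.2 0), max p.2 0)) (by fun_prop)
      fun p => ⟨le_max_right _ _, le_max_right _ _⟩
  · simp only [max_eq_left hτ, max_eq_left ht]

theorem continuousOn_Icc_s4 (hg : ContinuousOnTriangles g) (t : ℝ) :
    ContinuousOn (g t) (Icc 0 t) := by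
  obtain ⟨g', hg'_cont, hg'⟩ := hg.exists_continuous_extension
  exact (hg'_cont.comp (Continuous.prodMk_right t)).continuousOn.congr
    fun τ hτ => (hg' t τ hτ.1 hτ.2).symm

theorem exists_continuous_eq_integral_mul (hg : ContinuousOnTriangles g) {w : ℝ → ℝ}
    (hw : Continuous w) :
    ∃ I : ℝ → ℝ, Continuous I ∧ ∀ t, 0 ≤ t → I t = ∫ τ in 0..t, g t τ * w τ := by
  obtain ⟨g', hg'_cont, hg'⟩ := hg.exists_continuous_extension
  refine ⟨fun t => ∫ τ in 0..max t 0, g' (max t 0, τ) * w τ, by fun_prop, fun t ht => ?_⟩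
  simp only [max_eq_left ht]
  refine integral_congr fun τ hτ => ?_
  rw [uIcc_of_le ht] at hτ
  simp only [hg' t τ hτ.1 hτ.2]

end ContinuousOnTriangles

/-- **Paper's Theorem 6 (ε-stealth).** Under stability of the closed-loop LVIE with kernel
`K(t,σ) = ∫_σ^t G_cp(t,τ)(τ-σ)^(q-1)/(q-1)! dτ`, uniform boundedness of `∫₀ᵗ K(t,σ) dσ`,
and uniform boundedness of `∫₀^(min(t,1)) g_c(t,τ) dτ`, a polynomial FDIA of degree
`a ≤ q` admits a nonzero weight `h` making it `ε`-stealthy with respect to `u`. -/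
theorem epsilon_stealth_of_polynomial_fdia
    (q a : ℕ) (hq : 1 ≤ q) (haq : a ≤ q)
    (g_c G_cp : ℝ → ℝ → ℝ)
    (hgc_cont : ContinuousOnTriangles g_c)
    (hGcp_cont : ContinuousOnTriangles G_cp)
    (hnonneg : ∀ t τ : ℝ, 0 ≤ τ → τ ≤ t → 0 ≤ g_c t τ)
    (hdom : ∀ t τ : ℝ, 0 ≤ τ → τ ≤ t → g_c t τ ≤ G_cp t τ)
    (K : ℝ → ℝ → ℝ)
    (hK : ∀ t σ : ℝ, K t σ =
      ∫ τ in σ..t, G_cp t τ * (τ - σ) ^ (q - 1) / (Nat.factorial (q - 1) : ℝ))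
    -- (i) stability of the LVIE
    (hstab : ∀ ε : ℝ, 0 < ε → ∃ δ : ℝ, 0 < δ ∧
      ∀ φ : ℝ → ℝ, Continuous φ → (∀ t : ℝ, 0 ≤ t → |φ t| < δ) →
      ∀ x : ℝ → ℝ, Continuous x →
        (∀ t : ℝ, 0 ≤ t → x t = (∫ τ in (0:ℝ)..t, K t τ * x τ) + φ t) →
        ∀ t : ℝ, 0 ≤ t → |x t| < ε)
    -- (ii) uniform boundedness of the closed-loop kernel integral
    (M : ℝ) (hM : 0 ≤ M)
    (hbound : ∀ t : ℝ, 0 ≤ t → (∫ σ in (0:ℝ)..t, K t σ) ≤ M)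
    -- (iii) uniform boundedness of the controller kernel near τ = 0
    (M₁ : ℝ) (hM₁ : 0 ≤ M₁)
    (hbound₁ : ∀ t : ℝ, 0 ≤ t → (∫ τ in (0:ℝ)..(min t 1), g_c t τ) ≤ M₁) :
    ∀ ε : ℝ, 0 < ε → ∃ h : ℝ, h ≠ 0 ∧
      ∀ u : ℝ → ℝ, Continuous u →
        (∀ t : ℝ, 0 ≤ t → u t = (∫ τ in (0:ℝ)..t, K t τ * u τ) +
          (h / (Nat.factorial a : ℝ)) * ∫ τ in (0:ℝ)..t, g_c t τ * τ ^ a) →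
        ∀ t : ℝ, 0 ≤ t → |u t| ≤ ε := by
  have hGcp_le : ∀ t, 0 ≤ t → ∫ τ in 0..t, G_cp t τ * τ ^ q ≤ q.factorial * M := by
    intro t ht
    obtain ⟨n, rfl⟩ := Nat.exists_eq_add_of_le' hq
    have hK_int := hbound t ht
    simp only [hK, Nat.add_sub_cancel, sub_zero,
      integral_integral_mul_sub_pow ht (hGcp_cont.continuousOn_Icc_s4 t)] at hK_int
    rwa [intervalIntegral.integral_div, div_le_iff₀ (by positivity), mul_comm] at hK_int
  set B := M₁ + q.factorial * M
  have hI_le : ∀ t, 0 ≤ t → |∫ τ in 0..t, g_c t τ * τ ^ a| ≤ B := by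
    intro t ht
    rw [abs_of_nonneg (integral_nonneg ht fun τ hτ =>
      mul_nonneg (hnonneg t τ hτ.1 hτ.2) (pow_nonneg hτ.1 a))]
    exact (integral_mul_pow_le_integral_add ht haq (hgc_cont.continuousOn_Icc_s4 t)
      (hGcp_cont.continuousOn_Icc_s4 t) (fun τ hτ => hnonneg t τ hτ.1 hτ.2)
      (fun τ hτ => hdom t τ hτ.1 hτ.2)).trans (add_le_add (hbound₁ t ht) (hGcp_le t ht))
  intro ε hε
  obtain ⟨δ, hδ, hδ_stab⟩ := hstab ε hε
  obtain ⟨I, hI_cont, hI⟩ := hgc_cont.exists_continuous_eq_integral_mul (continuous_pow a)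
  have hB : 0 ≤ B := by positivity
  refine ⟨δ * a.factorial / (B + 1), by positivity, fun u hu hu_eq t ht => ?_⟩
  refine (hδ_stab (fun s => δ / (B + 1) * I s) (continuous_const.mul hI_cont) (fun s hs => ?_)
    u hu (fun s hs => ?_) t ht).le
  · rw [abs_mul, abs_of_pos (by positivity), hI s hs]
    calc δ / (B + 1) * |∫ τ in 0..s, g_c s τ * τ ^ a|
        ≤ δ / (B + 1) * B := by gcongr; exact hI_le s hs
      _ < δ := by rw [div_mul_eq_mul_div, div_lt_iff₀ (by positivity)]; linarith
  · rw [hI s hs, hu_eq s hs, mul_div_right_comm, mul_div_cancel_right₀ _ (by positivity)]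
end
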